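/- Let G be a locally finite simple graph on a vertex set V in which every vertex has positive degree, and let 𝓛 be its normalized Laplacian. Let S ⊆ V be a Λ-set for some Λ > 0, and let 0 ≤ ω < 1/Λ. If f, g : V → ℂ are functions such that h = f − g is supported in S, both ∑_{v∈V} |h(v)|² and ∑_{v∈V} |(𝓛h)(v)|² are finite, and ‖𝓛h‖ ≤ ω·‖h‖ (the Bernstein inequality satisfied by differences of Paley–Wiener functions of type ω), then f = g on all of V. -/

import Mathlib

/-- The normalized Laplacian of a locally finite simple graph, acting on `f : V → ℂ`:
`(𝓛 f) v = f v − ∑_{u ∼ v} f u / √(d u · d v)`. -/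
noncomputable def nLap {V : Type*} (G : SimpleGraph V) [G.LocallyFinite] (f : V → ℂ) (v : V) : ℂ :=
  f v - ∑ u ∈ G.neighborFinset v, f u / (Real.sqrt ((G.degree u : ℝ) * (G.degree v : ℝ)) : ℂ)

/-!
If `h = f - g` is supported in the `Λ`-set `S`, then `‖h‖ ≤ Λ ‖𝓛h‖ ≤ Λω ‖h‖`, and `Λω < 1`
forces `‖h‖ = 0`.
-/

section L2Norm

variable {ι E : Type*} [NormedAddCommGroup E]

/-- Only meaningful when `fun i ↦ ‖φ i‖ ^ 2` is summable; otherwise the `tsum` is `0`. -/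
noncomputable def l2Norm (φ : ι → E) : ℝ :=
  √(∑' i, ‖φ i‖ ^ 2)

lemma l2Norm_nonneg (φ : ι → E) : 0 ≤ l2Norm φ :=
  Real.sqrt_nonneg _

lemma eq_zero_of_l2Norm_eq_zero {φ : ι → E} (hφ : Summable fun i ↦ ‖φ i‖ ^ 2)
    (h : l2Norm φ = 0) : φ = 0 := by
  have htsum : ∑' i, ‖φ i‖ ^ 2 = 0 :=
    (Real.sqrt_eq_zero (tsum_nonneg fun i ↦ sq_nonneg _)).mp h
  have hsq : (fun i ↦ ‖φ i‖ ^ 2) = 0 :=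
    (hasSum_zero_iff_of_nonneg fun i ↦ sq_nonneg _).mp (htsum ▸ hφ.hasSum)
  funext i
  simpa using congrFun hsq i

end L2Norm

lemma eq_zero_of_le_mul_self_of_lt_one {a c : ℝ} (ha : 0 ≤ a) (hc : c < 1) (h : a ≤ c * a) :
    a = 0 := by
  nlinarith

section LambdaSet

variable {V : Type*} (G : SimpleGraph V) [G.LocallyFinite]

def IsLambdaSet (Λ : ℝ) (S : Set V) : Prop :=
  ∀ φ : V → ℂ, (∀ v, v ∉ S → φ v = 0) →
    Summable (fun v ↦ ‖φ v‖ ^ 2) → Summable (fun v ↦ ‖nLap G φ v‖ ^ 2) →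
    l2Norm φ ≤ Λ * l2Norm (nLap G φ)

variable {G}

lemma IsLambdaSet.eq_zero_of_bernstein {Λ ω : ℝ} {S : Set V} (hS : IsLambdaSet G Λ S)
    (hΛ : 0 < Λ) (hω : ω < 1 / Λ) {φ : V → ℂ} (hsupp : ∀ v, v ∉ S → φ v = 0)
    (hφ : Summable fun v ↦ ‖φ v‖ ^ 2) (hLφ : Summable fun v ↦ ‖nLap G φ v‖ ^ 2)
    (hBern : l2Norm (nLap G φ) ≤ ω * l2Norm φ) : φ = 0 := by
  have hΛω : Λ * ω < 1 := by rwa [lt_div_iff₀ hΛ, mul_comm] at hω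
  refine eq_zero_of_l2Norm_eq_zero hφ
    (eq_zero_of_le_mul_self_of_lt_one (l2Norm_nonneg φ) hΛω ?_)
  calc l2Norm φ ≤ Λ * l2Norm (nLap G φ) := hS φ hsupp hφ hLφ
    _ ≤ Λ * (ω * l2Norm φ) := by gcongr
    _ = Λ * ω * l2Norm φ := by ring

end LambdaSet

theorem eq_of_lambda_set_of_bernstein {V : Type*} (G : SimpleGraph V) [G.LocallyFinite]
    (Λ : ℝ) (hΛ : 0 < Λ) (S : Set V)
    (hS : ∀ φ : V → ℂ, (∀ v, v ∉ S → φ v = 0) →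
      Summable (fun v => ‖φ v‖ ^ 2) → Summable (fun v => ‖nLap G φ v‖ ^ 2) →
      Real.sqrt (∑' v, ‖φ v‖ ^ 2) ≤ Λ * Real.sqrt (∑' v, ‖nLap G φ v‖ ^ 2))
    (ω : ℝ) (hω : ω < 1 / Λ)
    (f g : V → ℂ)
    (hsupp : ∀ v, v ∉ S → f v - g v = 0)
    (hsum1 : Summable fun v => ‖f v - g v‖ ^ 2)
    (hsum2 : Summable fun v => ‖nLap G (f - g) v‖ ^ 2)
    (hBern : Real.sqrt (∑' v, ‖nLap G (f - g) v‖ ^ 2) ≤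
      ω * Real.sqrt (∑' v, ‖f v - g v‖ ^ 2)) :
    f = g :=
  sub_eq_zero.mp <| IsLambdaSet.eq_zero_of_bernstein (G := G) hS hΛ hω hsupp hsum1 hsum2 hBern
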